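/- For every arborescence T of G' rooted at u with d_T(u,v) > k·ℓ(u,v), the LP solution satisfies Σ_{e ∈ S_T} x_e ≥ 1. -/

import Mathlib

/-! Every path `p ∈ P` has length at most `k·ℓ(u,v) < d_T(u,v)`, so the potential `d_T(u,·)`
cannot satisfy the triangle inequality on every edge of `p`: some edge of `p` lies in `S_T`.
Thus `S_T` meets every path carrying flow, and
`Σ_{e ∈ S_T} x_e ≥ Σ_{e ∈ S_T} Σ_{p ∋ e} f_p ≥ Σ_p f_p ≥ 1`. -/

/-- `p` is a directed path from `u` to `v` along relation `R`. -/
def IsPathFrom {V : Type} (R : V → V → Prop) (u v : V) (p : List V) : Prop :=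
  p ≠ [] ∧ p.head? = some u ∧ p.getLast? = some v ∧ p.Chain' R

/-- Total length of a path, summing edge lengths over consecutive pairs. -/
def pathLen {V : Type} (ℓ : V → V → ℝ) (p : List V) : ℝ :=
  ((p.zip p.tail).map fun e => ℓ e.1 e.2).sum


/-- An arborescence on the vertex set `S`, rooted at `u`, in the graph with
edge relation `E`; `L w = d_T(u,w)` is the tree distance from the root. -/
structure Arborescence {V : Type} (S : Set V) (E : V → V → Prop)
    (ℓ : V → V → ℝ) (u : V) where
  par : V → V
  L : V → ℝ
  root_mem : u ∈ S
  par_root : par u = u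
  par_mem : ∀ w ∈ S, par w ∈ S
  reach : ∀ w ∈ S, ∃ j, par^[j] w = u
  edge : ∀ w ∈ S, w ≠ u → E (par w) w
  L_root : L u = 0
  L_step : ∀ w ∈ S, w ≠ u → L w = L (par w) + ℓ (par w) w

theorem List.IsChain.rel_of_mem_zip_tail {α : Type*} {R : α → α → Prop} :
    ∀ {l : List α}, l.IsChain R → ∀ {e : α × α}, e ∈ l.zip l.tail → R e.1 e.2
  | [], _, _, he | [_], _, _, he => by simp at he
  | a :: b :: t, h, e, he => by
    rw [List.isChain_cons_cons] at h
    rw [List.tail_cons, List.zip_cons_cons, List.mem_cons] at he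
    rcases he with rfl | he
    · exact h.1
    · exact rel_of_mem_zip_tail h.2 he

section Potential

variable {V : Type} (L : V → ℝ) (ℓ : V → V → ℝ)

theorem pathLen_cons_cons (a b : V) (t : List V) :
    pathLen ℓ (a :: b :: t) = ℓ a b + pathLen ℓ (b :: t) := by
  simp [pathLen]

theorem le_add_pathLen_of_forall_mem_zip_tail {p : List V} {a b : V}
    (hrelax : ∀ e ∈ p.zip p.tail, L e.2 ≤ L e.1 + ℓ e.1 e.2)
    (ha : p.head? = some a) (hb : p.getLast? = some b) :
    L b ≤ L a + pathLen ℓ p := by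
  induction p generalizing a with
  | nil => simp at ha
  | cons c t ih =>
    obtain rfl : c = a := by simpa using ha
    cases t with
    | nil =>
      obtain rfl : c = b := by simpa using hb
      simp [pathLen]
    | cons d t =>
      have hcd : L d ≤ L c + ℓ c d := hrelax (c, d) (by simp)
      have hd := ih (a := d) (fun e he => hrelax e (List.mem_cons_of_mem _ he)) rfl
        (by rwa [List.getLast?_cons_cons] at hb)
      rw [pathLen_cons_cons]
      linarith

theorem IsPathFrom.exists_tense_edge {R : V → V → Prop} {a b : V} {p : List V}
    (hp : IsPathFrom R a b p) (hlt : L a + pathLen ℓ p < L b) :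
    ∃ e ∈ p.zip p.tail, L e.1 + ℓ e.1 e.2 < L e.2 := by
  by_contra! hrelax
  exact (le_add_pathLen_of_forall_mem_zip_tail L ℓ hrelax hp.2.1 hp.2.2.1).not_gt hlt

end Potential

/-- Weak duality for fractional covering. -/
theorem Finset.sum_le_sum_of_forall_exists_rel {ι κ M : Type*} [AddCommMonoid M] [PartialOrder M]
    [IsOrderedAddMonoid M] (P : Finset ι) (S : Finset κ) (r : κ → ι → Prop) [DecidableRel r]
    (f : ι → M) (x : κ → M) (hf : ∀ p ∈ P, 0 ≤ f p) (hcover : ∀ p ∈ P, ∃ e ∈ S, r e p)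
    (hcap : ∀ e ∈ S, ∑ p ∈ P.filter (r e), f p ≤ x e) :
    ∑ p ∈ P, f p ≤ ∑ e ∈ S, x e :=
  calc ∑ p ∈ P, f p ≤ ∑ p ∈ P, ∑ _e ∈ S.filter (r · p), f p := by
        refine sum_le_sum fun p hp => ?_
        obtain ⟨e, heS, hep⟩ := hcover p hp
        exact single_le_sum (f := fun _ => f p) (fun _ _ => hf p hp) (mem_filter.2 ⟨heS, hep⟩)
    _ = ∑ e ∈ S, ∑ p ∈ P.filter (r e), f p :=
        sum_comm' fun p e => by simp only [mem_filter]; tauto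
    _ ≤ ∑ e ∈ S, x e := sum_le_sum hcap

theorem stmt4_general {V : Type} [DecidableEq V]
    (E : Finset (V × V)) (ℓ : V → V → ℝ)
    (u v : V) (k : ℝ)
    (P : Finset (List V))
    (hP : ∀ p ∈ P, IsPathFrom (fun a b => (a, b) ∈ E) u v p ∧ pathLen ℓ p ≤ k * ℓ u v)
    (x : V × V → ℝ) (f : List V → ℝ)
    (hf : ∀ p ∈ P, 0 ≤ f p)
    (hcap : ∀ e ∈ E, ∑ p ∈ P.filter (fun p => e ∈ p.zip p.tail), f p ≤ x e)
    (hdem : 1 ≤ ∑ p ∈ P, f p)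
    -- the induced subgraph `G' = G[𝒱_{u,v}]`
    (V' : Finset V) (hV' : V' = P.biUnion List.toFinset)
    (E' : Finset (V × V)) (hE' : E' = E.filter (fun e => e.1 ∈ V' ∧ e.2 ∈ V'))
    (T : Arborescence (↑V' : Set V) (fun a b => (a, b) ∈ E') ℓ u)
    (hT : k * ℓ u v < T.L v) :
    1 ≤ ∑ e ∈ E'.filter (fun e => T.L e.1 + ℓ e.1 e.2 < T.L e.2), x e := by
  have hvert : ∀ p ∈ P, ∀ w ∈ p, w ∈ V' := fun p hp w hw =>
    hV' ▸ Finset.mem_biUnion.2 ⟨p, hp, List.mem_toFinset.2 hw⟩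
  have hmemE' : ∀ e, e ∈ E' ↔ e ∈ E ∧ e.1 ∈ V' ∧ e.2 ∈ V' := fun e => by
    rw [hE', Finset.mem_filter]
  have hcover : ∀ p ∈ P, ∃ e ∈ E'.filter (fun e => T.L e.1 + ℓ e.1 e.2 < T.L e.2),
      e ∈ p.zip p.tail := by
    intro p hp
    obtain ⟨hpath, hlen⟩ := hP p hp
    obtain ⟨e, he, htense⟩ := hpath.exists_tense_edge T.L ℓ (by rw [T.L_root]; linarith)
    obtain ⟨he₁, he₂⟩ := List.of_mem_zip he
    refine ⟨e, Finset.mem_filter.2 ⟨(hmemE' e).2 ?_, htense⟩, he⟩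
    exact ⟨List.IsChain.rel_of_mem_zip_tail hpath.2.2.2 he, hvert p hp _ he₁,
      hvert p hp _ (List.mem_of_mem_tail he₂)⟩
  exact hdem.trans (Finset.sum_le_sum_of_forall_exists_rel P _ (fun e p => e ∈ p.zip p.tail)
    f x hf hcover fun e he => hcap e ((hmemE' e).1 (Finset.mem_filter.1 he).1).1)

/-- Claim 2: let `G'` be the subgraph of `G` induced on `𝒱_{u,v}`, the union of
the vertices of all `u`–`v` paths of length at most `k·ℓ(u,v)`. For every
arborescence `T` of `G'` rooted at `u` with `d_T(u,v) > k·ℓ(u,v)`, a feasible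
LP solution `(x,f)` satisfies `Σ_{e ∈ S_T} x_e ≥ 1`. -/
theorem stmt4 {V : Type} [Fintype V] [DecidableEq V]
    (E : Finset (V × V)) (ℓ : V → V → ℝ) (hℓ : ∀ a b, 0 ≤ ℓ a b)
    (u v : V) (huv : (u, v) ∈ E) (k : ℝ) (hk : 1 ≤ k)
    (P : Finset (List V))
    (hP : ∀ p ∈ P, IsPathFrom (fun a b => (a, b) ∈ E) u v p ∧ pathLen ℓ p ≤ k * ℓ u v)
    (x : V × V → ℝ) (f : List V → ℝ)
    (hx : ∀ e ∈ E, 0 ≤ x e) (hf : ∀ p ∈ P, 0 ≤ f p)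
    (hcap : ∀ e ∈ E, ∑ p ∈ P.filter (fun p => e ∈ p.zip p.tail), f p ≤ x e)
    (hdem : 1 ≤ ∑ p ∈ P, f p)
    -- the induced subgraph `G' = G[𝒱_{u,v}]`
    (V' : Finset V) (hV' : V' = P.biUnion List.toFinset)
    (E' : Finset (V × V)) (hE' : E' = E.filter (fun e => e.1 ∈ V' ∧ e.2 ∈ V'))
    (T : Arborescence (↑V' : Set V) (fun a b => (a, b) ∈ E') ℓ u)
    (hT : k * ℓ u v < T.L v) :
    1 ≤ ∑ e ∈ E'.filter (fun e => T.L e.1 + ℓ e.1 e.2 < T.L e.2), x e :=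
  stmt4_general E ℓ u v k P hP x f hf hcap hdem V' hV' E' hE' T hT
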